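/- Fix k ≥ 1, δ ∈ (0,1), δ̃ > 0, p ∈ (0,1), and constants 0 < c₁ < c₂ with E* + c₂ < δ̃/(1+δ̃) where E* ≥ 0 is fixed. Suppose γᵢ satisfies E* + c₁ ≤ γᵢ ≤ E* + c₂, and define γᵢ₊₁ = E* + 4k√(log(4/δ))·[√((1+δ̃)(1−γᵢ)/(δ̃(1−γᵢ)−γᵢ)) − √((1+δ̃)/δ̃)]·(1/√N). If N ≥ (4k/(p c₁))² · [√((δ̃+1)/(δ̃ − (E*+c₂)/(1−E*−c₂))) − √((δ̃+1)/δ̃)]² · log(4/δ), then (γᵢ₊₁ − E*)/(γᵢ − E*) ≤ p. -/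

import Mathlib

set_option maxHeartbeats 1000000

theorem stmt_6 (k δ δt p c₁ c₂ Estar γi N : ℝ)
    (hk : 1 ≤ k) (hδ0 : 0 < δ) (hδ1 : δ < 1) (hδt : 0 < δt)
    (hp0 : 0 < p) (hp1 : p < 1) (hc1 : 0 < c₁) (hc12 : c₁ < c₂)
    (hE : 0 ≤ Estar) (hEc2 : Estar + c₂ < δt / (1 + δt))
    (hγl : Estar + c₁ ≤ γi) (hγu : γi ≤ Estar + c₂)
    (hN : N ≥ (4 * k / (p * c₁)) ^ 2 *
      (Real.sqrt ((δt + 1) / (δt - (Estar + c₂) / (1 - Estar - c₂))) -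
        Real.sqrt ((δt + 1) / δt)) ^ 2 * Real.log (4 / δ)) :
    ((Estar + 4 * k * Real.sqrt (Real.log (4 / δ)) *
        (Real.sqrt ((1 + δt) * (1 - γi) / (δt * (1 - γi) - γi)) -
          Real.sqrt ((1 + δt) / δt)) * (1 / Real.sqrt N)) - Estar) / (γi - Estar) ≤ p := by
  have h1δt : (0:ℝ) < 1 + δt := by linarith
  have hmδ : (Estar + c₂) * (1 + δt) < δt := by
    have := (lt_div_iff₀ h1δt).mp hEc2
    linarith
  have hm0 : 0 < Estar + c₂ := by linarith
  have h1m : 0 < 1 - Estar - c₂ := by nlinarith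
  -- x := (Estar+c₂)/(1-Estar-c₂)
  set x : ℝ := (Estar + c₂) / (1 - Estar - c₂) with hxdef
  have hx0 : 0 < x := div_pos hm0 h1m
  have hxm : x * (1 - Estar - c₂) = Estar + c₂ := div_mul_cancel₀ _ (ne_of_gt h1m)
  have hxδt : x < δt := by
    rw [hxdef, div_lt_iff₀ h1m]; nlinarith
  have hdm : 0 < δt - x := by linarith
  have h1γ : 0 < 1 - γi := by nlinarith
  have hdi : 0 < δt * (1 - γi) - γi := by nlinarith
  -- key ratio inequality
  have hkey : (1 + δt) * (1 - γi) / (δt * (1 - γi) - γi) ≤ (δt + 1) / (δt - x) := by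
    rw [div_le_div_iff₀ hdi hdm]
    nlinarith [mul_pos h1γ h1m, mul_le_mul_of_nonneg_left (sub_nonneg.mpr hγu) (le_of_lt h1δt)]
  have hbase : (δt + 1) / δt ≤ (δt + 1) / (δt - x) :=
    div_le_div_of_nonneg_left (by linarith) hdm (by linarith)
  have hbaselt : (δt + 1) / δt < (δt + 1) / (δt - x) :=
    div_lt_div_of_pos_left (by linarith) hdm (by linarith)
  set s : ℝ := Real.sqrt ((δt + 1) / δt) with hs
  set Bm : ℝ := Real.sqrt ((δt + 1) / (δt - x)) - s with hBm
  have hBm0 : 0 < Bm := by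
    have := Real.sqrt_lt_sqrt (by positivity) hbaselt
    simp only [hBm, hs]; linarith
  set Bi : ℝ := Real.sqrt ((1 + δt) * (1 - γi) / (δt * (1 - γi) - γi)) -
      Real.sqrt ((1 + δt) / δt) with hBi
  have hBiBm : Bi ≤ Bm := by
    have h1 := Real.sqrt_le_sqrt hkey
    have h2 : (1 + δt) / δt = (δt + 1) / δt := by ring_nf
    simp only [hBi, hBm, hs, h2]; linarith
  have hL : 0 < Real.log (4 / δ) := Real.log_pos (by rw [lt_div_iff₀ hδ0]; linarith)
  set L := Real.log (4 / δ) with hLdef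
  have hC : 0 < 4 * k / (p * c₁) := by positivity
  have hNval : (4 * k / (p * c₁)) ^ 2 * Bm ^ 2 * L ≤ N := hN
  have hN0 : 0 < N := lt_of_lt_of_le (by positivity) hNval
  have hsqrtN : 4 * k / (p * c₁) * Bm * Real.sqrt L ≤ Real.sqrt N := by
    have h := Real.sqrt_le_sqrt hNval
    rwa [Real.sqrt_mul (by positivity), Real.sqrt_mul (by positivity),
      Real.sqrt_sq hC.le, Real.sqrt_sq hBm0.le] at h
  have hsN0 : 0 < Real.sqrt N := Real.sqrt_pos.mpr hN0
  have hγE : 0 < γi - Estar := by linarith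
  rw [div_le_iff₀ hγE]
  have hT : 4 * k * Real.sqrt L * Bi * (1 / Real.sqrt N) ≤ p * c₁ := by
    rw [mul_one_div, div_le_iff₀ hsN0]
    have h1 : 4 * k * Real.sqrt L * Bi ≤ 4 * k * Real.sqrt L * Bm := by
      have : (0:ℝ) ≤ 4 * k * Real.sqrt L := by positivity
      exact mul_le_mul_of_nonneg_left hBiBm this
    have h2 : 4 * k * Real.sqrt L * Bm ≤ p * c₁ * Real.sqrt N := by
      have := mul_le_mul_of_nonneg_left hsqrtN (by positivity : (0:ℝ) ≤ p * c₁)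
      have heq : p * c₁ * (4 * k / (p * c₁) * Bm * Real.sqrt L)
          = 4 * k * Real.sqrt L * Bm := by
        field_simp
      rw [heq] at this
      linarith
    linarith
  have hpc : p * c₁ ≤ p * (γi - Estar) := by nlinarith
  calc Estar + 4 * k * Real.sqrt L * Bi * (1 / Real.sqrt N) - Estar
      = 4 * k * Real.sqrt L * Bi * (1 / Real.sqrt N) := by ring
    _ ≤ p * c₁ := hT
    _ ≤ p * (γi - Estar) := hpc
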